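/- arXiv:2503.20567 — 3 statements merged into one kernel-verified Lean document; each statement's English description precedes it below -/
import Mathlib

section
/- The matrix X_n = B_n^{-1} A_n is lower Hessenberg plus a spike in the first column: X_n(i,j) = 0 whenever 2 ≤ j ≤ n and i ≥ j+2, and also whenever 1 ≤ i ≤ n-2 and j > i+2. -/
/-- a_i = -(i+α+1)(i+κ+1) -/
def acoef (α κ : ℝ) (i : ℕ) : ℝ := -(((i : ℝ) + α + 1) * ((i : ℝ) + κ + 1))

/-- b_i = i(2i+α+κ+1)+(i+α+1)(i+κ+1) -/
def bcoef (α κ : ℝ) (i : ℕ) : ℝ :=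
  (i : ℝ) * (2 * (i : ℝ) + α + κ + 1) + ((i : ℝ) + α + 1) * ((i : ℝ) + κ + 1)

/-- c_i = -i(3i+α+κ) -/
def ccoef (α κ : ℝ) (i : ℕ) : ℝ := -((i : ℝ) * (3 * (i : ℝ) + α + κ))

/-- d_i = (i-1)i -/
def dcoef (i : ℕ) : ℝ := ((i : ℝ) - 1) * (i : ℝ)

/-- The banded matrix `A_n` of the four-term recurrence: with 1-based
indices, `A_n(i,i) = b_{i-1}`, `A_n(i,i+1) = a_{i-1}`, `A_n(i+1,i) = c_i`,
`A_n(i+2,i) = d_{i+1}`.  Here `i : Fin n` is the 0-based index, so the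
coefficient index coincides with the 0-based row index. -/
def Amat (α κ : ℝ) (n : ℕ) : Matrix (Fin n) (Fin n) ℝ := fun i j =>
  if (i : ℕ) = (j : ℕ) then bcoef α κ i
  else if (j : ℕ) = (i : ℕ) + 1 then acoef α κ i
  else if (i : ℕ) = (j : ℕ) + 1 then ccoef α κ i
  else if (i : ℕ) = (j : ℕ) + 2 then dcoef i
  else 0

/-- The lower bidiagonal matrix `B_n` with diagonal entries
`e_{i-1} = i` (1-based) and subdiagonal entries `f_i = -i`. -/
def Bmat (n : ℕ) : Matrix (Fin n) (Fin n) ℝ := fun i j =>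
  if (i : ℕ) = (j : ℕ) then ((i : ℕ) : ℝ) + 1
  else if (i : ℕ) = (j : ℕ) + 1 then -((i : ℕ) : ℝ)
  else 0

/-- `X_n = B_n⁻¹ A_n`. -/
noncomputable def Xmat (α κ : ℝ) (n : ℕ) : Matrix (Fin n) (Fin n) ℝ :=
  (Bmat n)⁻¹ * Amat α κ n

/-
`B_n` times the lower triangular matrix whose row `i` is `1/(i+1)` on and below the diagonal
telescopes to the identity, so `X_n(i,j) = (i+1)⁻¹ ∑_{k ≤ i} A_n(k,j)` is a scaled partial column
sum of `A_n`. Column `j` of `A_n` is supported on rows `j-1, …, j+2`, so such a partial sum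
vanishes while `i < j - 1`, and for `j ≥ 1` also once it covers the whole column, since
`a_{j-1} + b_j + c_{j+1} + d_{j+2} = 0`.
-/

open Finset

def amatEntry (α κ : ℝ) (k j : ℕ) : ℝ :=
  if k = j then bcoef α κ k
  else if j = k + 1 then acoef α κ k
  else if k = j + 1 then ccoef α κ k
  else if k = j + 2 then dcoef k
  else 0

def bmatEntry (k j : ℕ) : ℝ :=
  if k = j then (k : ℝ) + 1 else if k = j + 1 then -(k : ℝ) else 0

lemma Bmat_apply {n : ℕ} (i j : Fin n) : Bmat n i j = bmatEntry i j := rfl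

lemma sum_Iic_fin_eq_sum_range {n : ℕ} (f : ℕ → ℝ) (i : Fin n) :
    ∑ k ∈ Iic i, f k = ∑ k ∈ range (i + 1), f k := by
  rw [Nat.range_succ_eq_Iic, ← Fin.map_valEmbedding_Iic, sum_map]
  rfl

lemma bmatEntry_eq_sub (k j : ℕ) :
    bmatEntry k j = (if k + 1 = j + 1 then ((k + 1 : ℕ) : ℝ) else 0) -
      (if k = j + 1 then (k : ℝ) else 0) := by
  unfold bmatEntry
  split_ifs <;> first | omega | push_cast; ring

lemma sum_range_bmatEntry (m j : ℕ) :
    ∑ k ∈ range m, bmatEntry k j = if m = j + 1 then (m : ℝ) else 0 := by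
  simp_rw [bmatEntry_eq_sub]
  rw [sum_range_sub (fun k => if k = j + 1 then (k : ℝ) else 0)]
  simp

lemma acoef_add_bcoef_add_ccoef_add_dcoef (α κ : ℝ) (j : ℕ) :
    acoef α κ j + bcoef α κ (j + 1) + ccoef α κ (j + 2) + dcoef (j + 3) = 0 := by
  unfold acoef bcoef ccoef dcoef
  push_cast
  ring

lemma sum_range_amatEntry_eq_zero_of_lt (α κ : ℝ) {m j : ℕ} (h : m < j) :
    ∑ k ∈ range m, amatEntry α κ k j = 0 :=
  sum_eq_zero fun k hk => by
    have := mem_range.mp hk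
    unfold amatEntry
    split_ifs <;> first | omega | rfl

lemma sum_range_amatEntry_eq_zero_of_add_three_le (α κ : ℝ) {m j : ℕ} (hj : 1 ≤ j)
    (hm : j + 3 ≤ m) :
    ∑ k ∈ range m, amatEntry α κ k j = 0 := by
  obtain ⟨j, rfl⟩ := Nat.exists_eq_add_of_le' hj
  obtain ⟨r, rfl⟩ := Nat.exists_eq_add_of_le hm
  have hband : ∀ k, k < j ∨ j + 4 ≤ k → amatEntry α κ k (j + 1) = 0 := by
    intro k hk
    unfold amatEntry
    split_ifs <;> first | omega | rfl
  have hlow : ∑ k ∈ range j, amatEntry α κ k (j + 1) = 0 :=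
    sum_eq_zero fun k hk => hband k (.inl (mem_range.mp hk))
  have hhigh : ∑ k ∈ range r, amatEntry α κ (j + 4 + k) (j + 1) = 0 :=
    sum_eq_zero fun k _ => hband _ (.inr (by omega))
  rw [show j + 1 + 3 + r = j + 4 + r by ring, sum_range_add, sum_range_add, hlow, hhigh]
  simp only [sum_range_succ, sum_range_zero, amatEntry]
  norm_num
  exact acoef_add_bcoef_add_ccoef_add_dcoef α κ j

noncomputable def BmatInv (n : ℕ) : Matrix (Fin n) (Fin n) ℝ :=
  Matrix.of fun i k => if k ≤ i then ((i : ℝ) + 1)⁻¹ else 0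

lemma BmatInv_mul_apply {n : ℕ} (M : Matrix (Fin n) (Fin n) ℝ) (i j : Fin n) :
    (BmatInv n * M) i j = ((i : ℝ) + 1)⁻¹ * ∑ k ∈ Iic i, M k j := by
  simp only [Matrix.mul_apply, BmatInv, Matrix.of_apply, ite_mul, zero_mul, mul_sum]
  rw [← sum_filter]
  congr 1
  ext k
  simp

lemma BmatInv_mul_Bmat (n : ℕ) : BmatInv n * Bmat n = 1 := by
  ext i j
  rw [BmatInv_mul_apply]
  simp only [Bmat_apply]
  rw [sum_Iic_fin_eq_sum_range (bmatEntry · j), sum_range_bmatEntry, Matrix.one_apply]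
  simp only [add_left_inj, ← Fin.ext_iff]
  split_ifs
  · push_cast
    exact inv_mul_cancel₀ (by positivity)
  · exact mul_zero _

lemma inv_Bmat (n : ℕ) : (Bmat n)⁻¹ = BmatInv n :=
  Matrix.inv_eq_left_inv (BmatInv_mul_Bmat n)

lemma Xmat_apply (α κ : ℝ) {n : ℕ} (i j : Fin n) :
    Xmat α κ n i j = ((i : ℝ) + 1)⁻¹ * ∑ k ∈ range (i + 1), amatEntry α κ k j := by
  rw [Xmat, inv_Bmat, BmatInv_mul_apply, ← sum_Iic_fin_eq_sum_range]
  rfl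

/-- `X_n` is tridiagonal plus a spike in the first column: using the
paper's 1-based indices `i = i₀+1`, `j = j₀+1`, `X_n(i,j) = 0` for
`2 ≤ j` and `i ≥ j+2`, and for `j > i+2`. -/
theorem Xmat_structure (α κ : ℝ) (n : ℕ) :
    (∀ i j : Fin n, 1 ≤ (j : ℕ) → (j : ℕ) + 2 ≤ (i : ℕ) → Xmat α κ n i j = 0) ∧
    (∀ i j : Fin n, (i : ℕ) + 2 < (j : ℕ) → Xmat α κ n i j = 0) := by
  refine ⟨fun i j hj hij => ?_, fun i j hij => ?_⟩
  · rw [Xmat_apply, sum_range_amatEntry_eq_zero_of_add_three_le α κ hj (by omega), mul_zero]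
  · rw [Xmat_apply, sum_range_amatEntry_eq_zero_of_lt α κ (by omega), mul_zero]
end

section
/- The superdiagonal entries of X_n = B_n^{-1} A_n are given by X_n(i-1, i) = -((i-1+α)(i-1+κ))/(i-1) for i = 2,…,n. -/
/-- Explicit inverse of `B_n`. -/
noncomputable def Binv (n : ℕ) : Matrix (Fin n) (Fin n) ℝ := fun i j =>
  if (j : ℕ) ≤ (i : ℕ) then 1 / (((i : ℕ) : ℝ) + 1) else 0

lemma Bmat_mul_Binv (n : ℕ) : Bmat n * Binv n = 1 := by
  ext r c
  rw [Matrix.mul_apply, Matrix.one_apply]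
  have key : ∀ k : Fin n, Bmat n r k * Binv n k c =
      (if k = r then (if (c : ℕ) ≤ (r : ℕ) then (1 : ℝ) else 0) else 0) +
      (if (k : ℕ) + 1 = (r : ℕ) then (if (c : ℕ) ≤ (k : ℕ) then (-1 : ℝ) else 0) else 0) := by
    intro k
    simp only [Bmat, Binv]
    have hr1 : ((r : ℕ) : ℝ) + 1 ≠ 0 := by positivity
    by_cases h1 : (r : ℕ) = (k : ℕ)
    · have hk : k = r := Fin.ext h1.symm
      have hne2 : ¬ ((k : ℕ) + 1 = (r : ℕ)) := by omega
      simp only [if_pos h1, if_pos hk, if_neg hne2, add_zero]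
      rw [show (k : ℕ) = (r : ℕ) from h1.symm]
      split
      · rw [one_div, mul_inv_cancel₀ hr1]
      · ring
    · have hk : ¬ k = r := fun h => h1 (by rw [h])
      by_cases h2 : (r : ℕ) = (k : ℕ) + 1
      · have h2' : (k : ℕ) + 1 = (r : ℕ) := h2.symm
        simp only [if_neg h1, if_pos h2, if_neg hk, if_pos h2', zero_add]
        split
        · rw [h2]
          push_cast
          have : ((k : ℕ) : ℝ) + 1 ≠ 0 := by positivity
          field_simp
        · ring
      · have h2' : ¬ (k : ℕ) + 1 = (r : ℕ) := fun h => h2 h.symm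
        simp only [if_neg h1, if_neg h2, if_neg hk, if_neg h2', zero_mul, add_zero]
  rw [Finset.sum_congr rfl (fun k _ => key k), Finset.sum_add_distrib]
  rw [Finset.sum_ite_eq' Finset.univ r _]
  simp only [Finset.mem_univ, if_true]
  have hsum2 : (∑ k : Fin n, if (k : ℕ) + 1 = (r : ℕ) then (if (c : ℕ) ≤ (k : ℕ) then (-1 : ℝ) else 0) else 0)
      = if (c : ℕ) + 1 ≤ (r : ℕ) then (-1 : ℝ) else 0 := by
    by_cases hr0 : (r : ℕ) = 0
    · rw [Finset.sum_eq_zero]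
      · simp [hr0]
      · intro k _
        have : ¬ (k : ℕ) + 1 = (r : ℕ) := by omega
        simp [this]
    · have hlt : (r : ℕ) - 1 < n := by omega
      rw [Finset.sum_eq_single ⟨(r : ℕ) - 1, hlt⟩]
      · have h1 : ((⟨(r : ℕ) - 1, hlt⟩ : Fin n) : ℕ) + 1 = (r : ℕ) := by simp; omega
        rw [if_pos h1]
        have : ((c : ℕ) ≤ (r : ℕ) - 1) = ((c : ℕ) + 1 ≤ (r : ℕ)) := by
          apply propext; constructor <;> (intro; omega)
        simp only [this]
      · intro k _ hk
        have : ¬ (k : ℕ) + 1 = (r : ℕ) := by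
          intro h
          apply hk
          apply Fin.ext
          simp; omega
        simp [this]
      · intro h; exact absurd (Finset.mem_univ _) h
  rw [hsum2]
  by_cases hrc : r = c
  · have : (c : ℕ) ≤ (r : ℕ) := by rw [hrc]
    have h2 : ¬ (c : ℕ) + 1 ≤ (r : ℕ) := by rw [hrc]; omega
    simp [hrc, this, h2]
  · have hrc' : (r : ℕ) ≠ (c : ℕ) := fun h => hrc (Fin.ext h)
    by_cases hle : (c : ℕ) ≤ (r : ℕ)
    · have h2 : (c : ℕ) + 1 ≤ (r : ℕ) := by omega
      simp [hrc, hle, h2]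
    · have h2 : ¬ (c : ℕ) + 1 ≤ (r : ℕ) := by omega
      simp [hrc, hle, h2]

lemma Bmat_inv (n : ℕ) : (Bmat n)⁻¹ = Binv n :=
  Matrix.inv_eq_right_inv (Bmat_mul_Binv n)

/-- Superdiagonal entries (1-based): `X_n(i-1,i) = -((i-1+α)(i-1+κ))/(i-1)`
for `i = 2,…,n`.  In 0-based indices: row `i-2`, column `i-1`. -/
theorem Xmat_superdiagonal (α κ : ℝ) (n : ℕ) :
    ∀ i : ℕ, ∀ _h2 : 2 ≤ i, ∀ _hn : i ≤ n,
      Xmat α κ n ⟨i - 2, by omega⟩ ⟨i - 1, by omega⟩ =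
        -(((i : ℝ) - 1 + α) * ((i : ℝ) - 1 + κ)) / ((i : ℝ) - 1) := by
  intro i h2 hn
  rw [Xmat, Bmat_inv, Matrix.mul_apply]
  have hi2 : i - 2 < n := by omega
  rw [Finset.sum_eq_single (⟨i - 2, hi2⟩ : Fin n)]
  · have h2' : ¬ ((i - 2 : ℕ) = (i - 1 : ℕ)) := by omega
    have h3 : (i - 1 : ℕ) = (i - 2 : ℕ) + 1 := by omega
    have hA : Amat α κ n ⟨i - 2, hi2⟩ ⟨i - 1, by omega⟩ = acoef α κ (i - 2) := by
      simp only [Amat]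
      rw [if_neg h2', if_pos h3]
    have hB : Binv n ⟨i - 2, by omega⟩ ⟨i - 2, hi2⟩ = 1 / (((i - 2 : ℕ) : ℝ) + 1) := by
      simp only [Binv]
      rw [if_pos (le_refl _)]
    rw [hB, hA, acoef]
    have hc2 : ((i - 2 : ℕ) : ℝ) = (i : ℝ) - 2 := by
      have : (i - 2 : ℕ) + 2 = i := by omega
      have := congrArg (Nat.cast : ℕ → ℝ) this
      push_cast at this
      linarith
    rw [hc2]
    have hne : (i : ℝ) - 1 ≠ 0 := by
      have : (2 : ℝ) ≤ (i : ℝ) := by exact_mod_cast h2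
      intro h; linarith
    rw [show (i : ℝ) - 2 + 1 = (i : ℝ) - 1 from by ring, one_div, inv_mul_eq_div,
      div_eq_div_iff hne hne]
    ring
  · intro k _ hk
    by_cases hle : (k : ℕ) ≤ i - 2
    · have hkne : (k : ℕ) ≠ i - 2 := fun h => hk (Fin.ext (by simp [h]))
      have e1 : ¬ ((k : ℕ) = (i - 1 : ℕ)) := by omega
      have e2 : ¬ ((i - 1 : ℕ) = (k : ℕ) + 1) := by omega
      have e3 : ¬ ((k : ℕ) = (i - 1 : ℕ) + 1) := by omega
      have e4 : ¬ ((k : ℕ) = (i - 1 : ℕ) + 2) := by omega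
      simp [Amat, e1, e2, e3, e4]
    · simp [Binv, hle]
  · intro h; exact absurd (Finset.mem_univ _) h
end

section
/- The first-column entries of X_n = B_n^{-1} A_n satisfy X_n(2,1) = ακ/2 - 1 and X_n(i,1) = ακ/i for i = 3,…,n. -/
/-!
`B_n` factors as `N_n D_n`, with `D_n = diag(1, …, n)` and `N_n` the backward-difference
matrix, whose inverse is the lower triangular all-ones matrix `M_n`. Hence
`X_n = D_n⁻¹ M_n A_n`, so `X_n(i,1)` is `1/i` times the `i`-th partial sum of the first column
`(b₀, c₁, d₂, 0, …)` of `A_n`. These partial sums are `b₀ + c₁ = ακ - 2` for `i = 2` and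
`b₀ + c₁ + d₂ = ακ` for `i ≥ 3`.
-/

open Finset Matrix

section LowerOnes

variable (R : Type*) [Ring R] (n : ℕ)

def lowerOnes : Matrix (Fin n) (Fin n) R := fun i j => if j ≤ i then 1 else 0

def backwardDiff : Matrix (Fin n) (Fin n) R := fun i j =>
  if i = j then 1 else if (i : ℕ) = (j : ℕ) + 1 then -1 else 0

theorem backwardDiff_mul_lowerOnes : backwardDiff R n * lowerOnes R n = 1 := by
  ext ⟨_ | i, hi⟩ j
  · rw [mul_apply, Fintype.sum_eq_single ⟨0, hi⟩]
    · simp [backwardDiff, lowerOnes, one_apply, Fin.ext_iff, Fin.le_iff_val_le_val, eq_comm]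
    · intro k hk
      rw [Ne, Fin.ext_iff] at hk
      simp [backwardDiff, Fin.ext_iff, Ne.symm hk]
  · rw [mul_apply, Fintype.sum_eq_add ⟨i + 1, hi⟩ ⟨i, by omega⟩ (by simp [Fin.ext_iff])]
    · simp only [backwardDiff, lowerOnes, one_apply, Fin.ext_iff, Fin.le_iff_val_le_val]
      split_ifs <;> first | omega | simp
    · rintro k ⟨hk₁, hk₂⟩
      rw [Ne, Fin.ext_iff] at hk₁ hk₂
      simp [backwardDiff, Fin.ext_iff, Ne.symm hk₁, Ne.symm hk₂]

variable {R n}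

theorem lowerOnes_mul_apply (A : Matrix (Fin n) (Fin n) R) (i j : Fin n) :
    (lowerOnes R n * A) i j = ∑ k ∈ Iic i, A k j := by
  simp only [mul_apply, lowerOnes, ite_mul, one_mul, zero_mul]
  rw [← sum_filter, filter_ge_eq_Iic]

end LowerOnes

theorem Fin.sum_Iic_val {M : Type*} [AddCommMonoid M] {n : ℕ} (f : ℕ → M) (m : Fin n) :
    ∑ k ∈ Iic m, f k = ∑ k ∈ Iic (m : ℕ), f k := by
  rw [← Fin.map_valEmbedding_Iic, sum_map]
  rfl

theorem Bmat_eq_backwardDiff_mul_diagonal (n : ℕ) :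
    Bmat n = backwardDiff ℝ n * diagonal (fun i : Fin n => (i : ℝ) + 1) := by
  ext i j
  simp only [Bmat, backwardDiff, mul_diagonal, Fin.ext_iff]
  split_ifs <;> simp_all

theorem inv_Bmat_s10 (n : ℕ) :
    (Bmat n)⁻¹ = diagonal (fun i : Fin n => ((i : ℝ) + 1)⁻¹) * lowerOnes ℝ n := by
  apply inv_eq_right_inv
  rw [Bmat_eq_backwardDiff_mul_diagonal, mul_assoc, ← mul_assoc (diagonal _),
    diagonal_mul_diagonal]
  simp_rw [mul_inv_cancel₀ (Nat.cast_add_one_ne_zero (R := ℝ) _), diagonal_one, one_mul]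
  exact backwardDiff_mul_lowerOnes ℝ n

-- `AmatFirstCol α κ k` is the paper's `A_n(k+1, 1)`.
def AmatFirstCol (α κ : ℝ) (k : ℕ) : ℝ :=
  if k = 0 then bcoef α κ 0 else if k = 1 then ccoef α κ 1 else if k = 2 then dcoef 2 else 0

theorem Amat_apply_of_val_eq_zero (α κ : ℝ) {n : ℕ} (k j : Fin n) (hj : (j : ℕ) = 0) :
    Amat α κ n k j = AmatFirstCol α κ k := by
  obtain ⟨k, hk⟩ := k
  simp only [Amat, AmatFirstCol, hj]
  rcases k with _ | _ | _ | k <;> simp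

theorem sum_Iic_AmatFirstCol_one (α κ : ℝ) : ∑ k ∈ Iic 1, AmatFirstCol α κ k = α * κ - 2 := by
  rw [← Nat.range_succ_eq_Iic, sum_range_succ, sum_range_one]
  norm_num [AmatFirstCol, bcoef, ccoef]
  ring

theorem sum_Iic_AmatFirstCol_of_two_le (α κ : ℝ) {m : ℕ} (hm : 2 ≤ m) :
    ∑ k ∈ Iic m, AmatFirstCol α κ k = α * κ := by
  rw [← sum_subset (Iic_subset_Iic.mpr hm)]
  · rw [← Nat.range_succ_eq_Iic, sum_range_succ, sum_range_succ, sum_range_one]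
    norm_num [AmatFirstCol, bcoef, ccoef, dcoef]
    ring
  · intro k _ hk
    simp only [mem_Iic, not_le] at hk
    rw [AmatFirstCol, if_neg (by omega), if_neg (by omega), if_neg (by omega)]

theorem Xmat_apply_of_val_eq_zero (α κ : ℝ) {n : ℕ} (m j : Fin n) (hj : (j : ℕ) = 0) :
    Xmat α κ n m j = ((m : ℝ) + 1)⁻¹ * ∑ k ∈ Iic (m : ℕ), AmatFirstCol α κ k := by
  rw [Xmat, inv_Bmat_s10, mul_assoc, diagonal_mul, lowerOnes_mul_apply, ← Fin.sum_Iic_val]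
  exact congrArg _ (sum_congr rfl fun k _ => Amat_apply_of_val_eq_zero α κ k j hj)

/-- First-column entries (1-based): `X_n(2,1) = ακ/2 - 1` and
`X_n(i,1) = ακ/i` for `i = 3,…,n`. -/
theorem Xmat_first_column (α κ : ℝ) (n : ℕ) (hn : 2 ≤ n) :
    Xmat α κ n ⟨1, by omega⟩ ⟨0, by omega⟩ = α * κ / 2 - 1 ∧
    (∀ i : ℕ, ∀ _h3 : 3 ≤ i, ∀ _hi : i ≤ n,
      Xmat α κ n ⟨i - 1, by omega⟩ ⟨0, by omega⟩ = α * κ / (i : ℝ)) := by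
  refine ⟨?_, fun i h3 hi => ?_⟩
  · rw [Xmat_apply_of_val_eq_zero _ _ _ _ rfl, sum_Iic_AmatFirstCol_one]
    norm_num
    ring
  · rw [Xmat_apply_of_val_eq_zero _ _ _ _ rfl,
      sum_Iic_AmatFirstCol_of_two_le _ _ (show 2 ≤ i - 1 by omega), Nat.cast_sub (by omega),
      Nat.cast_one, sub_add_cancel, inv_mul_eq_div]
end
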